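/- arXiv:0712.3221 — 2 statements merged into one kernel-verified Lean document; each statement's English description precedes it below -/
import Mathlib

section
/- Let L, T, s, D be nonnegative real numbers with T > 0, and let θ, α be real numbers. Suppose D ≤ L·sin α, L² ≤ T² + s² − 2·s·T·cos θ, and s² ≤ L² + T² − 2·L·T·sin α. Then D ≤ T − s·cos θ. -/
theorem stmt0 (L T s D θ α : ℝ) (hL : 0 ≤ L) (hT : 0 < T) (hs : 0 ≤ s) (hD : 0 ≤ D)
    (h1 : D ≤ L * Real.sin α)
    (h2 : L ^ 2 ≤ T ^ 2 + s ^ 2 - 2 * s * T * Real.cos θ)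
    (h3 : s ^ 2 ≤ L ^ 2 + T ^ 2 - 2 * L * T * Real.sin α) :
    D ≤ T - s * Real.cos θ := by
  nlinarith [mul_pos hT hT]
end

section
/- Let h, g : ℝ → ℝ be twice differentiable functions on [0, T] satisfying h''(t) ≥ h(t) and g''(t) = g(t) for all t ∈ [0, T], with h(0) = g(0) and h'(0) = g'(0). If h(t) ≥ 0 and g(t) ≥ 0 for all t ∈ [0, T], then h(t) ≥ g(t) for all t ∈ [0, T]. -/
/-!
The difference `w = h - g` satisfies `w'' ≥ w` with `w(0) = w'(0) = 0`. Since
`w'' - w = (d/dt - 1)(d/dt + 1) w`, two integrating factors finish the argument: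
`e^{-t} (w' + w)` is nondecreasing, so `w' + w ≥ 0`, and then `e^{t} w` is nondecreasing,
so `w ≥ 0`.
-/

open Set

theorem nonneg_of_mul_le_deriv {f : ℝ → ℝ} {c T : ℝ} (hf : Differentiable ℝ f)
    (hle : ∀ t ∈ Icc 0 T, c * f t ≤ deriv f t) (h0 : 0 ≤ f 0) :
    ∀ t ∈ Icc 0 T, 0 ≤ f t := by
  set F : ℝ → ℝ := fun t => Real.exp (-(c * t)) * f t
  have hF : ∀ t, HasDerivAt F (Real.exp (-(c * t)) * (deriv f t - c * f t)) t := by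
    intro t
    have hexp : HasDerivAt (fun t => Real.exp (-(c * t))) (Real.exp (-(c * t)) * -c) t :=
      ((hasDerivAt_id' t).const_mul c).fun_neg.exp.congr_deriv (by ring)
    exact (hexp.mul (hf t).hasDerivAt).congr_deriv (by ring)
  have hmono : MonotoneOn F (Icc 0 T) := by
    refine monotoneOn_of_deriv_nonneg (convex_Icc 0 T)
      (fun t _ => (hF t).continuousAt.continuousWithinAt)
      (fun t _ => (hF t).differentiableAt.differentiableWithinAt) fun t ht => ?_
    rw [interior_Icc] at ht
    rw [(hF t).deriv]
    exact mul_nonneg (Real.exp_pos _).le (sub_nonneg.2 (hle t (Ioo_subset_Icc_self ht)))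
  intro t ht
  have hF0 : F 0 ≤ F t := hmono (left_mem_Icc.2 (ht.1.trans ht.2)) ht ht.1
  simp only [F, mul_zero, neg_zero, Real.exp_zero, one_mul] at hF0
  exact nonneg_of_mul_nonneg_right (h0.trans hF0) (Real.exp_pos _)

theorem nonneg_of_le_deriv_deriv {w : ℝ → ℝ} {T : ℝ} (hw : Differentiable ℝ w)
    (hw' : Differentiable ℝ (deriv w)) (hle : ∀ t ∈ Icc 0 T, w t ≤ deriv (deriv w) t)
    (h0 : 0 ≤ w 0) (h0' : 0 ≤ deriv w 0) : ∀ t ∈ Icc 0 T, 0 ≤ w t := by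
  have hsum : ∀ t ∈ Icc 0 T, 0 ≤ deriv w t + w t := by
    refine nonneg_of_mul_le_deriv (c := 1) (hw'.add hw) (fun t ht => ?_) (by linarith)
    rw [deriv_fun_add (hw' t) (hw t)]
    linarith [hle t ht]
  exact nonneg_of_mul_le_deriv (c := -1) hw (fun t ht => by linarith [hsum t ht]) h0

theorem stmt2_general (h g : ℝ → ℝ) (T : ℝ)
    (hh : Differentiable ℝ h) (hh' : Differentiable ℝ (deriv h))
    (hg : Differentiable ℝ g) (hg' : Differentiable ℝ (deriv g))
    (hcomp : ∀ t ∈ Set.Icc 0 T, h t ≤ deriv (deriv h) t)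
    (geq : ∀ t ∈ Set.Icc 0 T, deriv (deriv g) t = g t)
    (h0 : h 0 = g 0) (h0' : deriv h 0 = deriv g 0) :
    ∀ t ∈ Set.Icc 0 T, g t ≤ h t := by
  have hd : deriv (h - g) = deriv h - deriv g := funext fun t => deriv_sub (hh t) (hg t)
  have hdd : deriv (deriv (h - g)) = deriv (deriv h) - deriv (deriv g) := by
    rw [hd]
    exact funext fun t => deriv_sub (hh' t) (hg' t)
  have hw : ∀ t ∈ Icc 0 T, 0 ≤ (h - g) t := by
    refine nonneg_of_le_deriv_deriv (hh.sub hg) (hd ▸ hh'.sub hg') (fun t ht => ?_)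
      (by simp [h0]) (by simp [hd, h0'])
    rw [hdd]
    simp only [Pi.sub_apply]
    linarith [hcomp t ht, geq t ht]
  exact fun t ht => sub_nonneg.1 (hw t ht)

theorem stmt2 (h g : ℝ → ℝ) (T : ℝ)
    (hh : Differentiable ℝ h) (hh' : Differentiable ℝ (deriv h))
    (hg : Differentiable ℝ g) (hg' : Differentiable ℝ (deriv g))
    (hcomp : ∀ t ∈ Set.Icc 0 T, h t ≤ deriv (deriv h) t)
    (geq : ∀ t ∈ Set.Icc 0 T, deriv (deriv g) t = g t)
    (h0 : h 0 = g 0) (h0' : deriv h 0 = deriv g 0)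
    (hpos : ∀ t ∈ Set.Icc 0 T, 0 ≤ h t)
    (gpos : ∀ t ∈ Set.Icc 0 T, 0 ≤ g t) :
    ∀ t ∈ Set.Icc 0 T, g t ≤ h t :=
  stmt2_general h g T hh hh' hg hg' hcomp geq h0 h0'
end
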